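/- Let R be a Noetherian ring that is right Krull-homogeneous, and let B be the largest left ideal of R with |B|_l < |R|_l. Then R/B is both left and right Krull-homogeneous, with |R/B|_r = |R|_r and |R/B|_l = |R|_l. -/

import Mathlib

/-!
In a modular lattice an interval `[y, x]` is trivial as soon as `[y ⊓ b, x ⊓ b]` and
`[y ⊔ b, x ⊔ b]` are, and otherwise its deviation is controlled by theirs; by induction on the
ordinal this gives `|M| ≤ max |N| |M/N|`. On the left this already gives the result: a nonzero left
ideal `P/B` of `R/B` of small dimension would lift to a left ideal `P` with
`|P|_l ≤ max |B|_l |P/B|_l < |R|_l`, so `P ⊆ B`.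

On the right, let `T/B` be the largest right submodule of `R/B` of dimension `< |R|_r`. It is
stable under left multiplication, so `T` is a two-sided ideal. For `A = r(T/B)`, the module `R/A`
embeds in a finite power of `T/B`; any `z ≠ 0` with `zA = 0` would give a nonzero right ideal
`zR`, a quotient of `R/A`, of small dimension, contradicting homogeneity. Hence `l(A) = 0`, so
`x ↦ (x aⱼ)` over generators `aⱼ` of `A` embeds `T` in a finite power of `B`, and `T ⊆ B`.
-/

universe u

/-- `DevLE α o`: the Gabriel–Rentschler deviation of the preorder `α` is at most `o`. -/
def DevLE (α : Type u) [Preorder α] (o : Ordinal.{u}) : Prop :=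
  ∀ f : ℕ → α, (∀ n, f (n + 1) ≤ f n) →
    ∃ N : ℕ, ∀ n, N ≤ n →
      f n ≤ f (n + 1) ∨
        ∃ o' : {x : Ordinal.{u} // x < o},
          DevLE {y : α // f (n + 1) ≤ y ∧ y ≤ f n} o'.1
termination_by o
decreasing_by exact o'.2

/-- The deviation (Krull dimension) of a preorder, as the least ordinal bound. -/
noncomputable def dev (α : Type u) [Preorder α] : Ordinal.{u} := sInf {o | DevLE α o}

/-- The left Krull dimension of a ring: deviation of the lattice of left ideals. -/
noncomputable def lKdim (R : Type u) [Ring R] : Ordinal.{u} := dev (Submodule R R)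

/-- The right Krull dimension of a ring: deviation of the lattice of right ideals. -/
noncomputable def rKdim (R : Type u) [Ring R] : Ordinal.{u} := dev (Submodule Rᵐᵒᵖ R)

/-- Krull dimension of a right ideal `J` as a right module: deviation of `[⊥, J]`. -/
noncomputable def rIdealDim (R : Type u) [Ring R] (J : Submodule Rᵐᵒᵖ R) : Ordinal.{u} :=
  dev {I : Submodule Rᵐᵒᵖ R // I ≤ J}

/-- Krull dimension of a left ideal `J` as a left module. -/
noncomputable def lIdealDim (R : Type u) [Ring R] (J : Submodule R R) : Ordinal.{u} :=
  dev {I : Submodule R R // I ≤ J}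

/-- A ring is right Krull homogeneous if every nonzero right ideal has full dimension. -/
def RightKH (R : Type u) [Ring R] : Prop :=
  ∀ J : Submodule Rᵐᵒᵖ R, J ≠ ⊥ → rIdealDim R J = rKdim R

def LeftKH (R : Type u) [Ring R] : Prop :=
  ∀ J : Submodule R R, J ≠ ⊥ → lIdealDim R J = lKdim R

/-- A two-sided ideal is prime if it is proper and `aRb ⊆ P` implies `a ∈ P` or `b ∈ P`. -/
def IsPrimeT {R : Type u} [Ring R] (P : TwoSidedIdeal R) : Prop :=
  (P : Set R) ≠ Set.univ ∧ ∀ a b : R, (∀ r : R, a * r * b ∈ P) → a ∈ P ∨ b ∈ P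

/-- Right Krull dimension of the quotient ring `R/I`. -/
noncomputable def rKdimQ {R : Type u} [Ring R] (I : TwoSidedIdeal R) : Ordinal.{u} :=
  rKdim I.ringCon.Quotient

noncomputable def lKdimQ {R : Type u} [Ring R] (I : TwoSidedIdeal R) : Ordinal.{u} :=
  lKdim I.ringCon.Quotient

/-- `Λ(R)`: primes with full right Krull dimension. -/
def Lam (R : Type u) [Ring R] : Set (TwoSidedIdeal R) :=
  {P | IsPrimeT P ∧ rKdimQ P = rKdim R}

/-- `Λ'(R)`: primes with full left Krull dimension. -/
def Lam' (R : Type u) [Ring R] : Set (TwoSidedIdeal R) :=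
  {P | IsPrimeT P ∧ lKdimQ P = lKdim R}

/-- A two-sided ideal viewed as a right ideal. -/
def rightIdealOf {R : Type u} [Ring R] (I : TwoSidedIdeal R) : Submodule Rᵐᵒᵖ R where
  carrier := I
  zero_mem' := I.zero_mem
  add_mem' := I.add_mem
  smul_mem' := fun r x hx => I.mul_mem_right x r.unop hx

/-- A two-sided ideal viewed as a left ideal. -/
def leftIdealOf {R : Type u} [Ring R] (I : TwoSidedIdeal R) : Submodule R R where
  carrier := I
  zero_mem' := I.zero_mem
  add_mem' := I.add_mem
  smul_mem' := fun r x hx => I.mul_mem_left r x hx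

/-- The right annihilator of a set, as a right ideal. -/
def rAnnIdeal (R : Type u) [Ring R] (S : Set R) : Submodule Rᵐᵒᵖ R where
  carrier := {x | ∀ y ∈ S, y * x = 0}
  zero_mem' := by intro y _; simp
  add_mem' := by intro a b ha hb y hy; rw [mul_add, ha y hy, hb y hy, add_zero]
  smul_mem' := by
    intro r x hx y hy
    show y * (x * r.unop) = 0
    rw [← mul_assoc, hx y hy, zero_mul]

/-- The left annihilator of a set. -/
def lAnnSet (R : Type u) [Ring R] (S : Set R) : Set R := {x | ∀ y ∈ S, x * y = 0}

open Set

section Deviation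

variable {α β : Type u}

theorem devLE_iff [Preorder α] {o : Ordinal.{u}} :
    DevLE α o ↔ ∀ f : ℕ → α, (∀ n, f (n + 1) ≤ f n) →
      ∃ N : ℕ, ∀ n, N ≤ n →
        f n ≤ f (n + 1) ∨
          ∃ o' : {x : Ordinal.{u} // x < o}, DevLE {y : α // f (n + 1) ≤ y ∧ y ≤ f n} o'.1 := by
  rw [DevLE]

theorem DevLE.mono [Preorder α] {o p : Ordinal.{u}} (h : DevLE α o) (hop : o ≤ p) :
    DevLE α p := by
  rw [devLE_iff] at h ⊢
  intro f hf
  obtain ⟨N, hN⟩ := h f hf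
  refine ⟨N, fun n hn => (hN n hn).imp_right ?_⟩
  rintro ⟨⟨o', ho'⟩, hd⟩
  exact ⟨⟨o', ho'.trans_le hop⟩, hd⟩

theorem DevLE.of_orderEmbedding [Preorder α] [Preorder β] {o : Ordinal.{u}} (e : α ↪o β)
    (h : DevLE β o) : DevLE α o := by
  induction o using WellFoundedLT.induction generalizing α β with
  | _ o IH =>
    rw [devLE_iff] at h ⊢
    intro f hf
    obtain ⟨N, hN⟩ := h (e ∘ f) (fun n => e.monotone (hf n))
    refine ⟨N, fun n hn => (hN n hn).imp e.le_iff_le.mp ?_⟩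
    rintro ⟨⟨o', ho'⟩, hd⟩
    refine ⟨⟨o', ho'⟩, IH o' ho' ?_ hd⟩
    exact ⟨⟨fun x => ⟨e x.1, e.monotone x.2.1, e.monotone x.2.2⟩,
      fun x y hxy => Subtype.ext (e.injective (congrArg Subtype.val hxy))⟩, e.le_iff_le⟩

theorem dev_le [Preorder α] {o : Ordinal.{u}} (h : DevLE α o) : dev α ≤ o :=
  csInf_le' h

theorem devLE_dev [Preorder α] (h : ∃ o, DevLE α o) : DevLE α (dev α) :=
  csInf_mem h

theorem dev_congr [Preorder α] [Preorder β] (e : α ≃o β) : dev α = dev β := by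
  have : {o | DevLE α o} = {o | DevLE β o} := Set.ext fun _ =>
    ⟨.of_orderEmbedding e.symm.toOrderEmbedding, .of_orderEmbedding e.toOrderEmbedding⟩
  rw [dev, dev, this]

theorem dev_le_of_orderEmbedding [Preorder α] [Preorder β] (e : α ↪o β)
    (h : ∃ o, DevLE β o) : dev α ≤ dev β :=
  dev_le ((devLE_dev h).of_orderEmbedding e)

theorem devLE_Icc_of_le [Preorder α] {a c : α} (h : c ≤ a) (o : Ordinal.{u}) :
    DevLE (Icc a c) o := by
  rw [devLE_iff]
  exact fun f _ => ⟨0, fun n _ => Or.inl ((f n).2.2.trans (h.trans (f (n + 1)).2.1))⟩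

def subtypeIccOrderIso [Preorder α] {s : Set α} [s.OrdConnected] (u v : s) :
    {z : s // u ≤ z ∧ z ≤ v} ≃o Icc (u : α) v where
  toFun z := ⟨z.1, z.2⟩
  invFun y := ⟨⟨y, Set.OrdConnected.out ‹_› u.2 v.2 y.2⟩, y.2⟩
  left_inv _ := rfl
  right_inv _ := rfl
  map_rel_iff' := Iff.rfl

end Deviation

section Modular

variable {α : Type u} [Lattice α] [IsModularLattice α]

theorem devLE_Icc_of_inf_sup (b : α) (o : Ordinal.{u}) (a c : α)
    (hinf : DevLE (Icc (a ⊓ b) (c ⊓ b)) o) (hsup : DevLE (Icc (a ⊔ b) (c ⊔ b)) o) :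
    DevLE (Icc a c) o := by
  induction o using WellFoundedLT.induction generalizing a c with
  | _ o IH =>
    rw [devLE_iff] at hinf hsup ⊢
    intro f hf
    obtain ⟨N₁, hN₁⟩ := hinf (fun n => ⟨f n ⊓ b, inf_le_inf_right b (f n).2.1,
      inf_le_inf_right b (f n).2.2⟩) (fun n => inf_le_inf_right b (Subtype.coe_le_coe.mpr (hf n)))
    obtain ⟨N₂, hN₂⟩ := hsup (fun n => ⟨f n ⊔ b, sup_le_sup_right (f n).2.1 b,
      sup_le_sup_right (f n).2.2 b⟩) (fun n => sup_le_sup_right (Subtype.coe_le_coe.mpr (hf n)) b)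
    refine ⟨max N₁ N₂, fun n hn => ?_⟩
    set x : α := (f n : α)
    set y : α := (f (n + 1) : α)
    have hinf' : x ⊓ b ≤ y ⊓ b ∨ ∃ o₁ < o, DevLE (Icc (y ⊓ b) (x ⊓ b)) o₁ :=
      (hN₁ n (le_of_max_le_left hn)).imp_right fun ⟨⟨o₁, ho₁⟩, h⟩ => ⟨o₁, ho₁,
        h.of_orderEmbedding (subtypeIccOrderIso (s := Icc (a ⊓ b) (c ⊓ b)) ⟨y ⊓ b, _⟩
          ⟨x ⊓ b, _⟩).symm.toOrderEmbedding⟩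
    have hsup' : x ⊔ b ≤ y ⊔ b ∨ ∃ o₂ < o, DevLE (Icc (y ⊔ b) (x ⊔ b)) o₂ :=
      (hN₂ n (le_of_max_le_right hn)).imp_right fun ⟨⟨o₂, ho₂⟩, h⟩ => ⟨o₂, ho₂,
        h.of_orderEmbedding (subtypeIccOrderIso (s := Icc (a ⊔ b) (c ⊔ b)) ⟨y ⊔ b, _⟩
          ⟨x ⊔ b, _⟩).symm.toOrderEmbedding⟩
    by_cases hstep : x ⊓ b ≤ y ⊓ b ∧ x ⊔ b ≤ y ⊔ b
    · exact Or.inl (eq_of_le_of_inf_le_of_sup_le (show y ≤ x from hf n) hstep.1 hstep.2).ge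
    obtain ⟨o', ho', h₁, h₂⟩ : ∃ o' < o,
        DevLE (Icc (y ⊓ b) (x ⊓ b)) o' ∧ DevLE (Icc (y ⊔ b) (x ⊔ b)) o' := by
      rcases hinf' with h₁ | ⟨o₁, ho₁, h₁⟩ <;> rcases hsup' with h₂ | ⟨o₂, ho₂, h₂⟩
      · exact absurd ⟨h₁, h₂⟩ hstep
      · exact ⟨o₂, ho₂, devLE_Icc_of_le h₁ _, h₂⟩
      · exact ⟨o₁, ho₁, h₁, devLE_Icc_of_le h₂ _⟩
      · exact ⟨max o₁ o₂, max_lt ho₁ ho₂, h₁.mono (le_max_left _ _), h₂.mono (le_max_right _ _)⟩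
    exact Or.inr ⟨⟨o', ho'⟩,
      (IH o' ho' y x h₁ h₂).of_orderEmbedding (subtypeIccOrderIso _ _).toOrderEmbedding⟩

theorem devLE_of_Iic_of_Ici [BoundedOrder α] (b : α) {o : Ordinal.{u}}
    (hlow : DevLE (Iic b) o) (hhigh : DevLE (Ici b) o) : DevLE α o := by
  have h := devLE_Icc_of_inf_sup b o ⊥ ⊤
    (hlow.of_orderEmbedding (OrderIso.setCongr _ _ (by simp)).toOrderEmbedding)
    (hhigh.of_orderEmbedding (OrderIso.setCongr _ _ (by simp)).toOrderEmbedding)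
  exact h.of_orderEmbedding
    ((OrderIso.setCongr _ _ Set.Icc_bot_top).trans (OrderIso.Set.univ)).symm.toOrderEmbedding

end Modular

section WellFounded

variable {α : Type u} [PartialOrder α] [WellFoundedGT α]

theorem exists_devLE_Ici (x : α) : ∃ o, DevLE (Ici x) o := by
  induction x using WellFoundedGT.induction with
  | _ x IH =>
    refine ⟨Order.succ (⨆ y : Ioi x, dev (Ici y.1)), ?_⟩
    rw [devLE_iff]
    intro f hf
    have hanti : Antitone f := antitone_nat_of_succ_le hf
    by_cases hbot : ∃ n, (f n : α) = x
    · obtain ⟨n₀, hn₀⟩ := hbot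
      have hconst : ∀ n, n₀ ≤ n → f n = f n₀ := fun n hn =>
        le_antisymm (hanti hn) (Subtype.coe_le_coe.mp (hn₀.le.trans (f n).2))
      exact ⟨n₀, fun n hn => Or.inl ((hconst n hn).le.trans (hconst (n + 1) (by omega)).ge)⟩
    push Not at hbot
    refine ⟨0, fun n _ => Or.inr ?_⟩
    have hlt : x < f (n + 1) := lt_of_le_of_ne (f (n + 1)).2 (hbot _).symm
    refine ⟨⟨dev (Ici (f (n + 1) : α)),
      Order.lt_succ_of_le (le_ciSup Ordinal.bddAbove_of_small (⟨_, hlt⟩ : Ioi x))⟩, ?_⟩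
    exact (devLE_dev (IH _ hlt)).of_orderEmbedding
      ⟨⟨fun z => ⟨z.1, z.2.1⟩, fun z₁ z₂ h => by ext; simpa using congrArg Subtype.val h⟩, Iff.rfl⟩

theorem exists_devLE [OrderBot α] : ∃ o, DevLE α o := by
  obtain ⟨o, ho⟩ := exists_devLE_Ici (⊥ : α)
  exact ⟨o, ho.of_orderEmbedding
    ((OrderIso.setCongr _ _ Set.Ici_bot).trans OrderIso.Set.univ).symm.toOrderEmbedding⟩

end WellFounded

section ModuleDev

open Submodule

noncomputable def moduleDev (S : Type u) [Ring S] (M : Type u) [AddCommGroup M] [Module S M] :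
    Ordinal.{u} :=
  dev (Submodule S M)

variable {S : Type u} [Ring S] {M N : Type u} [AddCommGroup M] [AddCommGroup N]
  [Module S M] [Module S N]

theorem moduleDev_congr (e : M ≃ₗ[S] N) : moduleDev S M = moduleDev S N :=
  dev_congr (orderIsoMapComap e)

theorem dev_Iic_eq_moduleDev (p : Submodule S M) :
    dev {q : Submodule S M // q ≤ p} = moduleDev S p :=
  dev_congr (MapSubtype.orderIso p).symm

theorem moduleDev_top : moduleDev S (⊤ : Submodule S M) = moduleDev S M :=
  moduleDev_congr topEquiv

theorem moduleDev_le_of_injective [IsNoetherian S N] (f : M →ₗ[S] N)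
    (hf : Function.Injective f) : moduleDev S M ≤ moduleDev S N :=
  dev_le_of_orderEmbedding (OrderEmbedding.ofMapLEIff (map f)
    fun p q => map_le_map_iff_of_injective hf p q) exists_devLE

theorem moduleDev_le_of_surjective [IsNoetherian S M] (f : M →ₗ[S] N)
    (hf : Function.Surjective f) : moduleDev S N ≤ moduleDev S M :=
  dev_le_of_orderEmbedding (OrderEmbedding.ofMapLEIff (comap f)
    fun _ _ => comap_le_comap_iff_of_surjective hf) exists_devLE

theorem moduleDev_submodule_le [IsNoetherian S M] (p : Submodule S M) :
    moduleDev S p ≤ moduleDev S M :=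
  moduleDev_le_of_injective p.subtype p.injective_subtype

theorem moduleDev_quotient_le [IsNoetherian S M] (p : Submodule S M) :
    moduleDev S (M ⧸ p) ≤ moduleDev S M :=
  moduleDev_le_of_surjective p.mkQ p.mkQ_surjective

theorem moduleDev_range_le [IsNoetherian S M] (f : M →ₗ[S] N) :
    moduleDev S (LinearMap.range f) ≤ moduleDev S M :=
  moduleDev_le_of_surjective f.rangeRestrict f.surjective_rangeRestrict

theorem moduleDev_map_le [IsNoetherian S M] (f : M →ₗ[S] N) (p : Submodule S M) :
    moduleDev S (map f p) ≤ moduleDev S p := by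
  have : map f p = LinearMap.range (f ∘ₗ p.subtype) := by
    rw [LinearMap.range_comp, range_subtype]
  exact this ▸ moduleDev_range_le _

theorem moduleDev_range_le_quotient [IsNoetherian S M] (f : M →ₗ[S] N) {p : Submodule S M}
    (hp : p ≤ LinearMap.ker f) : moduleDev S (LinearMap.range f) ≤ moduleDev S (M ⧸ p) := by
  rw [← range_liftQ p f hp]
  exact moduleDev_range_le _

theorem moduleDev_le_max [IsNoetherian S M] (p : Submodule S M) :
    moduleDev S M ≤ max (moduleDev S p) (moduleDev S (M ⧸ p)) :=
  dev_le <| devLE_of_Iic_of_Ici p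
    (((devLE_dev exists_devLE).mono (le_max_left _ _)).of_orderEmbedding
      (MapSubtype.orderIso p).symm.toOrderEmbedding)
    (((devLE_dev exists_devLE).mono (le_max_right _ _)).of_orderEmbedding
      (comapMkQRelIso p).symm.toOrderEmbedding)

theorem moduleDev_le_max_ker_range [IsNoetherian S M] (f : M →ₗ[S] N) :
    moduleDev S M ≤ max (moduleDev S (LinearMap.ker f)) (moduleDev S (LinearMap.range f)) := by
  rw [← moduleDev_congr f.quotKerEquivRange]
  exact moduleDev_le_max _

theorem moduleDev_prod_le [IsNoetherian S M] [IsNoetherian S N] :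
    moduleDev S (M × N) ≤ max (moduleDev S M) (moduleDev S N) := by
  refine (moduleDev_le_max_ker_range (LinearMap.snd S M N)).trans (max_le_max ?_ ?_)
  · rw [LinearMap.ker_snd]
    exact moduleDev_range_le (LinearMap.inl S M N)
  · exact moduleDev_submodule_le _

theorem moduleDev_pi_le [IsNoetherian S M] (k : ℕ) : moduleDev S (Fin k → M) ≤ moduleDev S M := by
  induction k with
  | zero =>
    exact (moduleDev_le_of_surjective (0 : M →ₗ[S] Fin 0 → M)
      fun _ => ⟨0, Subsingleton.elim _ _⟩)
  | succ k ih =>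
    rw [← moduleDev_congr (Fin.consLinearEquiv S fun _ : Fin (k + 1) => M)]
    exact moduleDev_prod_le.trans (max_le le_rfl ih)

theorem moduleDev_sup_le [IsNoetherian S M] (p q : Submodule S M) :
    moduleDev S (p ⊔ q : Submodule S M) ≤ max (moduleDev S p) (moduleDev S q) := by
  have : p ⊔ q = LinearMap.range (p.subtype.coprod q.subtype) := by
    rw [LinearMap.range_coprod, range_subtype, range_subtype]
  exact this ▸ (moduleDev_range_le _).trans moduleDev_prod_le

theorem moduleDev_quotient_ker_le [IsNoetherian S N] (f : M →ₗ[S] N) :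
    moduleDev S (M ⧸ LinearMap.ker f) ≤ moduleDev S N := by
  rw [moduleDev_congr f.quotKerEquivRange]
  exact moduleDev_submodule_le _

theorem moduleDev_comap_mkQ_le [IsNoetherian S M] (p : Submodule S M) (P : Submodule S (M ⧸ p)) :
    moduleDev S (comap p.mkQ P) ≤ max (moduleDev S p) (moduleDev S P) := by
  set g := p.mkQ ∘ₗ (comap p.mkQ P).subtype
  have hker : LinearMap.ker g = comap (comap p.mkQ P).subtype p := by
    rw [LinearMap.ker_comp, ker_mkQ]
  have hrange : LinearMap.range g = P := by
    rw [LinearMap.range_comp, range_subtype, map_comap_eq_of_surjective p.mkQ_surjective]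
  have hp : p ≤ comap p.mkQ P := fun x hx => by simp [(Quotient.mk_eq_zero p).mpr hx]
  refine (moduleDev_le_max_ker_range g).trans (le_of_eq ?_)
  rw [hker, hrange, moduleDev_congr (comapSubtypeEquivOfLe hp)]

end ModuleDev

section Homogeneity

open Submodule

variable {S : Type u} [Ring S] {M : Type u} [AddCommGroup M] [Module S M] [IsNoetherian S M]

theorem exists_isGreatest_moduleDev_lt (d : Ordinal.{u}) :
    ∃ T, IsGreatest {P : Submodule S M | P = ⊥ ∨ moduleDev S P < d} T := by
  set s := {P : Submodule S M | P = ⊥ ∨ moduleDev S P < d}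
  have hs : SupClosed s := by
    rintro P (rfl | hP) Q hQ
    · simpa using hQ
    rcases hQ with rfl | hQ
    · simpa [s] using Or.inr hP
    exact Or.inr ((moduleDev_sup_le P Q).trans_lt (max_lt hP hQ))
  exact ⟨sSup s, CompleteLattice.WellFoundedGT.isSupClosedCompact _ inferInstance s
    ⟨⊥, Or.inl rfl⟩ hs, fun _ => le_sSup⟩

theorem map_le_of_isGreatest_moduleDev_lt {d : Ordinal.{u}} {T : Submodule S M}
    (hT : IsGreatest {P : Submodule S M | P = ⊥ ∨ moduleDev S P < d} T) (f : M →ₗ[S] M) :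
    map f T ≤ T :=
  hT.2 <| hT.1.imp (fun h => by rw [h, Submodule.map_bot]) (moduleDev_map_le f T).trans_lt

theorem dev_eq_and_forall_dev_Iic_eq {L : Type u} [Lattice L] [OrderBot L] (e : L ≃o Submodule S M)
    [Nontrivial M] {d : Ordinal.{u}} (hM : moduleDev S M ≤ d)
    (hP : ∀ P : Submodule S M, P ≠ ⊥ → d ≤ moduleDev S P) :
    dev L = d ∧ ∀ J : L, J ≠ ⊥ → dev {I // I ≤ J} = d := by
  have key : ∀ P : Submodule S M, P ≠ ⊥ → moduleDev S P = d := fun P hP₀ =>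
    le_antisymm ((moduleDev_submodule_le P).trans hM) (hP P hP₀)
  refine ⟨(dev_congr e).trans (moduleDev_top.symm.trans (key ⊤ top_ne_bot)), fun J hJ => ?_⟩
  calc dev {I // I ≤ J} = dev (Iic (e J)) := dev_congr (e.Iic J)
    _ = d := (dev_Iic_eq_moduleDev (e J)).trans (key _ (by simpa using hJ))

end Homogeneity

section QuotientRing

open Submodule

theorem Submodule.bijective_liftQ_of_ker_eq {R R₂ M M₂ : Type*} [Ring R] [Ring R₂]
    [AddCommGroup M] [AddCommGroup M₂] [Module R M] [Module R₂ M₂] {σ : R →+* R₂}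
    [RingHomSurjective σ] {p : Submodule R M} {f : M →ₛₗ[σ] M₂} (hf : Function.Surjective f)
    (hp : LinearMap.ker f = p) : Function.Bijective (p.liftQ f hp.ge) :=
  ⟨LinearMap.ker_eq_bot.mp (ker_liftQ_eq_bot p f hp.ge hp.le),
    LinearMap.range_eq_top.mp ((range_liftQ p f hp.ge).trans (LinearMap.range_eq_top.mpr hf))⟩

variable {R : Type u} [Ring R] (B : TwoSidedIdeal R)

instance : RingHomSurjective B.ringCon.mk' := ⟨B.ringCon.mk'_surjective⟩

instance : RingHomSurjective (RingHom.op B.ringCon.mk') :=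
  ⟨fun x => ⟨.op (B.ringCon.mk'_surjective x.unop).choose,
    congrArg MulOpposite.op (B.ringCon.mk'_surjective x.unop).choose_spec⟩⟩

theorem TwoSidedIdeal.mk'_eq_zero_iff {r : R} : B.ringCon.mk' r = 0 ↔ r ∈ B := by
  rw [← RingCon.coe_zero]
  exact RingCon.eq _

def TwoSidedIdeal.mkOpSemilinear : R →ₛₗ[RingHom.op B.ringCon.mk'] B.ringCon.Quotient where
  toFun := B.ringCon.mk'
  map_add' := map_add _
  map_smul' c r := map_mul B.ringCon.mk' r c.unop

noncomputable def leftIdealsQuotientOrderIso :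
    Submodule B.ringCon.Quotient B.ringCon.Quotient ≃o Submodule R (R ⧸ leftIdealOf B) :=
  (orderIsoMapComapOfBijective _ (bijective_liftQ_of_ker_eq (f := B.ringCon.mk'.toSemilinearMap)
    B.ringCon.mk'_surjective (by ext; exact B.mk'_eq_zero_iff))).symm

noncomputable def rightIdealsQuotientOrderIso :
    Submodule B.ringCon.Quotientᵐᵒᵖ B.ringCon.Quotient ≃o Submodule Rᵐᵒᵖ (R ⧸ rightIdealOf B) :=
  (orderIsoMapComapOfBijective _ (bijective_liftQ_of_ker_eq (f := B.mkOpSemilinear)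
    B.ringCon.mk'_surjective (by ext; exact B.mk'_eq_zero_iff))).symm

end QuotientRing

section KrullHomogeneous

open Submodule

variable {R : Type u} [Ring R]

@[simp]
theorem mem_leftIdealOf {I : TwoSidedIdeal R} {x : R} : x ∈ leftIdealOf I ↔ x ∈ I := Iff.rfl

@[simp]
theorem mem_rightIdealOf {I : TwoSidedIdeal R} {x : R} : x ∈ rightIdealOf I ↔ x ∈ I := Iff.rfl

theorem lIdealDim_eq_moduleDev (J : Submodule R R) : lIdealDim R J = moduleDev R J :=
  dev_Iic_eq_moduleDev J

theorem rIdealDim_eq_moduleDev (J : Submodule Rᵐᵒᵖ R) : rIdealDim R J = moduleDev Rᵐᵒᵖ J :=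
  dev_Iic_eq_moduleDev J

theorem one_notMem_of_lIdealDim_lt {B : TwoSidedIdeal R}
    (h1 : lIdealDim R (leftIdealOf B) < lKdim R) : (1 : R) ∉ B := by
  intro h
  have htop : leftIdealOf B = ⊤ := eq_top_iff.mpr fun x _ => by
    simpa using B.mul_mem_left x 1 h
  rw [htop, lIdealDim_eq_moduleDev, moduleDev_top] at h1
  exact h1.false

theorem lKdim_le_moduleDev_of_ne_bot [IsNoetherianRing R] {B : TwoSidedIdeal R}
    (h1 : lIdealDim R (leftIdealOf B) < lKdim R)
    (h2 : ∀ K : Submodule R R, lIdealDim R K < lKdim R → K ≤ leftIdealOf B)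
    (P : Submodule R (R ⧸ leftIdealOf B)) (hP : P ≠ ⊥) : lKdim R ≤ moduleDev R P := by
  by_contra! hlt
  refine hP (eq_bot_iff.mpr ?_)
  have hX : comap (leftIdealOf B).mkQ P ≤ leftIdealOf B := h2 _ <| by
    rw [lIdealDim_eq_moduleDev] at h1 ⊢
    exact (moduleDev_comap_mkQ_le _ P).trans_lt (max_lt h1 hlt)
  rw [← map_comap_eq_of_surjective (mkQ_surjective _) P]
  exact (map_mono hX).trans (mkQ_map_self _).le

/-- The annihilator `r(T/B)` of the right module `T/B`. -/
def rightColon (B T : TwoSidedIdeal R) : Submodule Rᵐᵒᵖ R where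
  carrier := {a | ∀ t ∈ T, t * a ∈ B}
  zero_mem' t _ := by simp
  add_mem' ha hb t ht := by simpa [mul_add] using B.add_mem (ha t ht) (hb t ht)
  smul_mem' c a ha t ht := by
    simpa [← mul_assoc] using B.mul_mem_right _ c.unop (ha t ht)

theorem moduleDev_quotient_rightColon_le [IsNoetherianRing R] [IsNoetherian Rᵐᵒᵖ R]
    (B T : TwoSidedIdeal R) :
    moduleDev Rᵐᵒᵖ (R ⧸ rightColon B T) ≤
      moduleDev Rᵐᵒᵖ (map (rightIdealOf B).mkQ (rightIdealOf T)) := by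
  obtain ⟨k, t, ht⟩ := fg_iff_exists_fin_generating_family.mp
    (IsNoetherian.noetherian (leftIdealOf T))
  have htT : ∀ i, t i ∈ T := fun i =>
    show t i ∈ leftIdealOf T from ht ▸ subset_span (Set.mem_range_self i)
  let φ : Fin k → R →ₗ[Rᵐᵒᵖ] map (rightIdealOf B).mkQ (rightIdealOf T) := fun i =>
    LinearMap.codRestrict _ ((rightIdealOf B).mkQ ∘ₗ LinearMap.mulLeft Rᵐᵒᵖ (t i))
      fun x => mem_map_of_mem (T.mul_mem_right _ x (htT i))
  have hcolon : rightColon B T = ⨅ i, LinearMap.ker (φ i) := by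
    ext a
    simp only [mem_iInf, LinearMap.mem_ker, φ, ← Subtype.coe_inj, LinearMap.codRestrict_apply,
      LinearMap.comp_apply, mkQ_apply, LinearMap.mulLeft_apply, ZeroMemClass.coe_zero,
      Quotient.mk_eq_zero, mem_rightIdealOf]
    refine ⟨fun ha i => ha _ (htT i), fun ha x hx => ?_⟩
    have hle : leftIdealOf T ≤ comap (LinearMap.toSpanSingleton R R a) (leftIdealOf B) :=
      ht ▸ span_le.mpr (Set.range_subset_iff.mpr ha)
    exact hle hx
  rw [hcolon, ← LinearMap.ker_pi]
  exact (moduleDev_quotient_ker_le _).trans (moduleDev_pi_le k)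

theorem eq_zero_of_mem_lAnnSet [IsNoetherian Rᵐᵒᵖ R] (hKH : RightKH R) {A : Submodule Rᵐᵒᵖ R}
    (hA : moduleDev Rᵐᵒᵖ (R ⧸ A) < rKdim R) {z : R} (hz : z ∈ lAnnSet R A) : z = 0 := by
  by_contra hz0
  have hne : LinearMap.range (LinearMap.mulLeft Rᵐᵒᵖ z) ≠ ⊥ := fun h => by
    have hz1 : z * 1 ∈ LinearMap.range (LinearMap.mulLeft Rᵐᵒᵖ z) := LinearMap.mem_range_self _ 1
    rw [h, mem_bot, mul_one] at hz1
    exact hz0 hz1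
  have hdim := hKH _ hne
  rw [rIdealDim_eq_moduleDev] at hdim
  have hle := moduleDev_range_le_quotient (LinearMap.mulLeft Rᵐᵒᵖ z) (p := A)
    fun a ha => LinearMap.mem_ker.mpr (hz a ha)
  exact (hdim.symm.trans_le hle).trans_lt hA |>.false

theorem moduleDev_le_of_forall_mul_mem [IsNoetherianRing R] [IsNoetherian Rᵐᵒᵖ R]
    {A : Submodule Rᵐᵒᵖ R} (hA : ∀ z ∈ lAnnSet R A, z = 0) {I K : Submodule R R}
    (hK : ∀ x ∈ K, ∀ a ∈ A, x * a ∈ I) : moduleDev R K ≤ moduleDev R I := by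
  obtain ⟨m, a, ha⟩ := fg_iff_exists_fin_generating_family.mp (IsNoetherian.noetherian A)
  have haA : ∀ j, a j ∈ A := fun j => ha ▸ subset_span (Set.mem_range_self j)
  let ψ : Fin m → K →ₗ[R] I := fun j =>
    (LinearMap.toSpanSingleton R R (a j)).restrict fun x hx => hK x hx _ (haA j)
  have hψ : Function.Injective (LinearMap.pi ψ) := by
    rw [← LinearMap.ker_eq_bot, LinearMap.ker_pi, eq_bot_iff]
    intro x hx
    simp only [mem_iInf, LinearMap.mem_ker, ψ, ← Subtype.coe_inj, ZeroMemClass.coe_zero] at hx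
    have hAx : A ≤ LinearMap.ker (LinearMap.mulLeft Rᵐᵒᵖ (x : R)) :=
      ha ▸ span_le.mpr (Set.range_subset_iff.mpr hx)
    exact (mem_bot R).mpr (Subtype.ext (hA _ fun b hb => hAx hb))
  exact (moduleDev_le_of_injective _ hψ).trans (moduleDev_pi_le m)

theorem le_of_moduleDev_map_mkQ_lt [IsNoetherianRing R] [IsNoetherian Rᵐᵒᵖ R]
    (hKH : RightKH R) {B : TwoSidedIdeal R} (h1 : lIdealDim R (leftIdealOf B) < lKdim R)
    (h2 : ∀ K : Submodule R R, lIdealDim R K < lKdim R → K ≤ leftIdealOf B) (T : TwoSidedIdeal R)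
    (hT : moduleDev Rᵐᵒᵖ (map (rightIdealOf B).mkQ (rightIdealOf T)) < rKdim R) : T ≤ B := by
  have hA := (moduleDev_quotient_rightColon_le B T).trans_lt hT
  have hK : moduleDev R (leftIdealOf T) ≤ moduleDev R (leftIdealOf B) :=
    moduleDev_le_of_forall_mul_mem (fun z hz => eq_zero_of_mem_lAnnSet hKH hA hz)
      fun t ht a ha => ha t ht
  rw [lIdealDim_eq_moduleDev] at h1
  exact fun x hx => h2 _ ((lIdealDim_eq_moduleDev _).trans_lt (hK.trans_lt h1)) hx

theorem rKdim_le_moduleDev_of_ne_bot [IsNoetherianRing R] [IsNoetherian Rᵐᵒᵖ R]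
    (hKH : RightKH R) {B : TwoSidedIdeal R} (h1 : lIdealDim R (leftIdealOf B) < lKdim R)
    (h2 : ∀ K : Submodule R R, lIdealDim R K < lKdim R → K ≤ leftIdealOf B)
    (P : Submodule Rᵐᵒᵖ (R ⧸ rightIdealOf B)) (hP : P ≠ ⊥) : rKdim R ≤ moduleDev Rᵐᵒᵖ P := by
  by_contra! hlt
  set Br := rightIdealOf B
  obtain ⟨Tb, hTb⟩ := exists_isGreatest_moduleDev_lt (S := Rᵐᵒᵖ) (M := R ⧸ Br) (rKdim R)
  have hTb0 : Tb ≠ ⊥ := fun h => hP (eq_bot_iff.mpr (h ▸ hTb.2 (Or.inr hlt)))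
  -- Left multiplications are endomorphisms of the right module `R/B`, so they preserve `Tb`.
  have hmul : ∀ r x, x ∈ comap Br.mkQ Tb → r * x ∈ comap Br.mkQ Tb := fun r x hx =>
    map_le_of_isGreatest_moduleDev_lt hTb _ <| mem_map_of_mem (p := Tb)
      (f := Br.mapQ Br (LinearMap.mulLeft Rᵐᵒᵖ r) fun b hb => B.mul_mem_left r b hb) hx
  let T : TwoSidedIdeal R := .mk' (comap Br.mkQ Tb) (zero_mem _) add_mem neg_mem (hmul _ _)
    fun hx => (comap Br.mkQ Tb).smul_mem (.op _) hx
  have hT : rightIdealOf T = comap Br.mkQ Tb := by ext; simp [T]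
  have hTB : T ≤ B := le_of_moduleDev_map_mkQ_lt hKH h1 h2 T <| by
    rw [hT, map_comap_eq_of_surjective (mkQ_surjective _)]
    exact hTb.1.resolve_left hTb0
  refine hTb0 (eq_bot_iff.mpr ?_)
  rw [← map_comap_eq_of_surjective (mkQ_surjective Br) Tb, ← hT]
  exact (map_mono fun x hx => hTB hx).trans (mkQ_map_self _).le

end KrullHomogeneous

/-- If `R` is Noetherian and right Krull-homogeneous and `B` is the largest
left ideal with `|B|_l < |R|_l`, then `R/B` is left and right Krull-homogeneous with
`|R/B|_r = |R|_r` and `|R/B|_l = |R|_l`. -/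
theorem stmt5 (R : Type u) [Ring R] [IsNoetherianRing R] [IsNoetherianRing Rᵐᵒᵖ]
    (hKH : RightKH R) (B : TwoSidedIdeal R)
    (h1 : lIdealDim R (leftIdealOf B) < lKdim R)
    (h2 : ∀ K : Submodule R R, lIdealDim R K < lKdim R → K ≤ leftIdealOf B) :
    RightKH B.ringCon.Quotient ∧ LeftKH B.ringCon.Quotient ∧
      rKdimQ B = rKdim R ∧ lKdimQ B = lKdim R := by
  have : IsNoetherian Rᵐᵒᵖ R := isNoetherian_of_linearEquiv (MulOpposite.opLinearEquiv Rᵐᵒᵖ).symm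
  have hB := one_notMem_of_lIdealDim_lt h1
  have : Nontrivial (R ⧸ leftIdealOf B) :=
    Submodule.Quotient.nontrivial_iff.mpr fun h => hB (Submodule.eq_top_iff'.mp h 1)
  have : Nontrivial (R ⧸ rightIdealOf B) :=
    Submodule.Quotient.nontrivial_iff.mpr fun h => hB (Submodule.eq_top_iff'.mp h 1)
  obtain ⟨hr, hrKH⟩ := dev_eq_and_forall_dev_Iic_eq (rightIdealsQuotientOrderIso B) (d := rKdim R)
    (moduleDev_quotient_le _) (rKdim_le_moduleDev_of_ne_bot hKH h1 h2)
  obtain ⟨hl, hlKH⟩ := dev_eq_and_forall_dev_Iic_eq (leftIdealsQuotientOrderIso B) (d := lKdim R)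
    (moduleDev_quotient_le _) (lKdim_le_moduleDev_of_ne_bot h1 h2)
  exact ⟨fun J hJ => (hrKH J hJ).trans hr.symm, fun J hJ => (hlKH J hJ).trans hl.symm, hr, hl⟩
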